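/- arXiv:2501.19296 — 2 statements merged into one kernel-verified Lean document; each statement's English description precedes it below -/
import Mathlib

section
/- Let z be the operator on ℓ²(ℤ) (or on ⊕_{n∈ℤ} K) defined on finitely supported vectors by z h_n = q^{-n} (A h)_{n+1}, where A is a bounded self-adjoint operator on K commuting with the grading. Then z z* = q² z* z on finitely supported vectors. -/
/-!
Both `z z*` and `z* z` send `h_n` to a multiple of `(A² h)_n`, with weights `q^{-2(n-1)}` and
`q^{-2n}` respectively; their ratio is `q²`. By linearity it suffices to check this on the
vectors `h_n`, which span `ℤ →₀ K`.
-/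

lemma zpow_neg_pred_mul_self {G₀ : Type*} [GroupWithZero G₀] {q : G₀} (hq : q ≠ 0) (n : ℤ) :
    q ^ (-(n - 1)) * q ^ (-(n - 1)) = q ^ 2 * (q ^ (-n) * q ^ (-n)) := by
  rw [← zpow_add₀ hq, ← zpow_add₀ hq, ← zpow_natCast, ← zpow_add₀ hq]
  congr 1
  ring

theorem stmt5_general {K : Type*} [NormedAddCommGroup K] [InnerProductSpace ℂ K]
    (q : ℝ) (hq0 : 0 < q)
    (A : K →L[ℂ] K)
    (z zs : (ℤ →₀ K) →ₗ[ℂ] (ℤ →₀ K))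
    (hz : ∀ (n : ℤ) (h : K),
      z (Finsupp.single n h) = ((q ^ (-n) : ℝ) : ℂ) • Finsupp.single (n + 1) (A h))
    (hzs : ∀ (n : ℤ) (h : K),
      zs (Finsupp.single n h) = ((q ^ (-(n - 1)) : ℝ) : ℂ) • Finsupp.single (n - 1) (A h)) :
    ∀ x : ℤ →₀ K, z (zs x) = ((q : ℂ) ^ 2) • zs (z x) := by
  suffices z ∘ₗ zs = (q : ℂ) ^ 2 • (zs ∘ₗ z) from LinearMap.congr_fun this
  refine Finsupp.lhom_ext fun n h => ?_
  have hq : (q : ℂ) ≠ 0 := Complex.ofReal_ne_zero.mpr hq0.ne'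
  simp only [LinearMap.comp_apply, LinearMap.smul_apply, hz, hzs, map_smul, smul_smul,
    sub_add_cancel, add_sub_cancel_right, Complex.ofReal_zpow, zpow_neg_pred_mul_self hq]

/-- On finitely supported vectors of ⊕_{n∈ℤ} K (here `ℤ →₀ K`),
with A a bounded self-adjoint operator on K, the operator
`z h_n = q^{-n} (A h)_{n+1}` with formal adjoint `zs h_n = q^{-(n-1)} (A h)_{n-1}`
satisfies `z z* = q² z* z`. -/
theorem stmt5 {K : Type*} [NormedAddCommGroup K] [InnerProductSpace ℂ K] [CompleteSpace K]
    (q : ℝ) (hq0 : 0 < q) (hq1 : q < 1)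
    (A : K →L[ℂ] K) (hA : IsSelfAdjoint A)
    (z zs : (ℤ →₀ K) →ₗ[ℂ] (ℤ →₀ K))
    (hz : ∀ (n : ℤ) (h : K),
      z (Finsupp.single n h) = ((q ^ (-n) : ℝ) : ℂ) • Finsupp.single (n + 1) (A h))
    (hzs : ∀ (n : ℤ) (h : K),
      zs (Finsupp.single n h) = ((q ^ (-(n - 1)) : ℝ) : ℂ) • Finsupp.single (n - 1) (A h)) :
    ∀ x : ℤ →₀ K, z (zs x) = ((q : ℂ) ^ 2) • zs (z x) :=
  stmt5_general q hq0 A z zs hz hzs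
end

section
/- Fix q ∈ (0,1), n ∈ ℕ, and a q-invariant Borel measure ν on [0,∞). On the dense domain D of compactly-supported functions in L²(X_{q,n}, μ_n) with support in I_q^{n-1} × (0,∞), define operators z_k and z_j (j < n = k) by (z_n h)(t_1,…,t_n) = q t_n h(t_1,…,t_{n-1}, q t_n) and (z_j h)(t_1,…,t_n) = sqrt((q t_j)² − 1) · t_{j+1}⋯t_n · h(t_1,…,q t_j,…,t_n). Then these operators satisfy z_j z_i = q z_i z_j for j > i on D. -/
open Classical

/-- The set I_q = {q^{-m} : m ∈ ℕ, m ≥ 1}. -/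
def Iq (q : ℝ) : Set ℝ := {t : ℝ | ∃ m : ℕ, t = q ^ (-((m : ℤ) + 1))}

/-- The operators z_1, …, z_n of the Schrödinger-type representation of
O(C_q^n) on functions on X_{q,n} = I_q^{n-1} × [0,∞):
(z_n h)(t) = q t_n h(t_1,…,q t_n) and, for j < n,
(z_j h)(t) = χ_{I_q}(q t_j) sqrt((q t_j)² − 1) t_{j+1}⋯t_n h(t_1,…,q t_j,…,t_n). -/
noncomputable def zop (q : ℝ) {n : ℕ} (j : Fin n) (h : (Fin n → ℝ) → ℂ)
    (t : Fin n → ℝ) : ℂ :=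
  if (j : ℕ) + 1 = n then
    ((q * t j : ℝ) : ℂ) * h (Function.update t j (q * t j))
  else
    ((if q * t j ∈ Iq q then
        Real.sqrt ((q * t j) ^ 2 - 1) * ∏ i ∈ Finset.univ.filter (fun i => j < i), t i
      else 0 : ℝ) : ℂ) * h (Function.update t j (q * t j))

/-- on the domain D of compactly supported L²-functions with
support in I_q^{n-1} × (0,∞), the operators above satisfy
z_j z_i = q z_i z_j for j > i. -/
theorem stmt12 (q : ℝ) (hq0 : 0 < q) (hq1 : q < 1) (n : ℕ) (hn : 0 < n)
    (h : (Fin n → ℝ) → ℂ) (hcs : HasCompactSupport h)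
    (hsupp : ∀ t : Fin n → ℝ, h t ≠ 0 →
      (∀ j : Fin n, (j : ℕ) + 1 < n → t j ∈ Iq q) ∧ 0 < t ⟨n - 1, by omega⟩) :
    ∀ i j : Fin n, i < j →
      zop q j (zop q i h) = fun t => (q : ℂ) * zop q i (zop q j h) t := by
  intro i j hij
  have hijn : (i : ℕ) < (j : ℕ) := hij
  have hjn := j.isLt
  have hine : ¬ ((i : ℕ) + 1 = n) := by omega
  have hne : i ≠ j := Fin.ne_of_lt hij
  funext t
  have hupd1 : Function.update t j (q * t j) i = t i := Function.update_of_ne hne _ _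
  have hupd2 : Function.update t i (q * t i) j = t j := Function.update_of_ne hne.symm _ _
  have hcomm : Function.update (Function.update t j (q * t j)) i (q * t i)
      = Function.update (Function.update t i (q * t i)) j (q * t j) :=
    Function.update_comm hne.symm _ _ _
  have hjmem : j ∈ Finset.univ.filter (fun k => i < k) := by simp [hij]
  have hprod1 : ∏ k ∈ Finset.univ.filter (fun k => i < k), Function.update t j (q * t j) k
      = q * ∏ k ∈ Finset.univ.filter (fun k => i < k), t k := by
    rw [Finset.prod_update_of_mem hjmem, mul_assoc, ← Finset.prod_eq_mul_prod_sdiff_singleton_of_mem hjmem]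
  have hprod2 : ∏ k ∈ Finset.univ.filter (fun k => j < k), Function.update t i (q * t i) k
      = ∏ k ∈ Finset.univ.filter (fun k => j < k), t k := by
    refine Finset.prod_congr rfl fun k hk => ?_
    have hk' : k ≠ i := by
      simp only [Finset.mem_filter] at hk
      exact (lt_trans hij hk.2).ne'
    exact Function.update_of_ne hk' _ _
  by_cases hj : (j : ℕ) + 1 = n
  · simp only [zop, if_pos hj, if_neg hine, hupd1, hupd2, hcomm, hprod1]
    push_cast
    split_ifs <;> push_cast <;> ring
  · simp only [zop, if_neg hj, if_neg hine, hupd1, hupd2, hcomm, hprod1, hprod2]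
    push_cast
    split_ifs <;> push_cast <;> ring
end
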